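/- Fix an integer κ ≥ 1 and an integer n ≥ 1, and set h = 1/n. Let š : {(t,s) : 0 ≤ s < t ≤ 1} → [0,1] be a measurable map such that for all s < t: the numbers t − š(t,s) and t − s lie in the same grid interval [ℓh, (ℓ+1)h) for some integer ℓ ≥ 0 (in particular |š(t,s) − s| ≤ h and š(t,s) < t), and š(t,s) = s whenever t − s ≤ κh. Define čK(t,s) = (t − š(t,s))^{H−1/2} for s < t and čK(t,s) = 0 for s ≥ t. Then there exists a constant C > 0, depending only on H and κ, such that for all grid points s = j/n and t = m/n with t − s ≥ κh, |∫₀^s (t−r)^{H−1/2}(s−r)^{H−1/2} dr − ∫₀^s čK(t,r) čK(s,r) dr| ≤ C ( n^{−1} (t−s)^{2H−1} + n^{−H−1/2} (t−s)^{H−1/2} ). -/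

import Mathlib

open MeasureTheory intervalIntegral Real

/-- The abstract hybrid-scheme kernel `čK(t,s) = (t - š(t,s))^(H-1/2)` for `s < t`,
and `0` for `s ≥ t`, built from a shift map `š`. -/
noncomputable def checkK (H : ℝ) (sh : ℝ → ℝ → ℝ) (t s : ℝ) : ℝ :=
  if s < t then (t - sh t s) ^ (H - 1/2) else 0


lemma measurable_rpow_right (α : ℝ) : Measurable (fun x : ℝ => x ^ α) := by measurability

/-- Lipschitz-type bound for `rpow` with negative exponent, away from 0. -/
lemma rpow_diff_le_aux {α c x y : ℝ} (hα : α < 0) (hc : 0 < c) (hx : c ≤ x) (hy : c ≤ y) :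
    |x ^ α - y ^ α| ≤ (-α) * c ^ (α - 1) * |x - y| := by
  have hder : ∀ z ∈ Set.Ici c, HasDerivWithinAt (fun z : ℝ => z ^ α) (α * z ^ (α - 1))
      (Set.Ici c) z := by
    intro z hz
    exact (Real.hasDerivAt_rpow_const (Or.inl (lt_of_lt_of_le hc hz).ne')).hasDerivWithinAt
  have hbound : ∀ z ∈ Set.Ici c, ‖α * z ^ (α - 1)‖ ≤ (-α) * c ^ (α - 1) := by
    intro z hz
    rw [norm_mul, Real.norm_eq_abs, Real.norm_eq_abs, abs_of_neg hα,
      abs_of_nonneg (Real.rpow_nonneg (le_of_lt (lt_of_lt_of_le hc hz)) _)]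
    have : z ^ (α - 1) ≤ c ^ (α - 1) :=
      Real.rpow_le_rpow_of_nonpos hc hz (by linarith)
    nlinarith [neg_pos.2 hα]
  have := (convex_Ici c).norm_image_sub_le_of_norm_hasDerivWithin_le hder hbound hy hx
  simpa [Real.norm_eq_abs] using this

/-- `(s - r)^β` is interval integrable on `[0, s]` for `β > -1`. -/
lemma II_sub_rpow (s β : ℝ) (hβ : -1 < β) :
    IntervalIntegrable (fun r => (s - r) ^ β) volume 0 s := by
  have h := (intervalIntegral.intervalIntegrable_rpow' (a := 0) (b := s) hβ).comp_sub_left s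
  simpa using h.symm

lemma II_J1 {α v : ℝ} (hα0 : α < 0) (hα1 : -1 < α) (hv : 0 < v) {a b : ℝ}
    (ha : 0 ≤ a) (hb : 0 ≤ b) :
    IntervalIntegrable (fun u => (v + u) ^ (α - 1) * u ^ α) volume a b := by
  apply IntervalIntegrable.mono_fun'
    (g := fun u => v ^ (α - 1) * u ^ α) ((intervalIntegrable_rpow' hα1).const_mul _)
  · exact (((measurable_rpow_right (α-1)).comp (measurable_const.add measurable_id)).mul
      (measurable_rpow_right α)).aestronglyMeasurable
  · filter_upwards [ae_restrict_mem measurableSet_uIoc] with x hx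
    have hx0 : 0 < x := by
      rcases Set.mem_uIoc.1 hx with h | h
      · linarith [h.1]
      · linarith [h.1]
    have h1 : 0 ≤ (v + x) ^ (α - 1) := Real.rpow_nonneg (by linarith) _
    have h2 : 0 ≤ x ^ α := Real.rpow_nonneg hx0.le _
    rw [Real.norm_eq_abs, abs_of_nonneg (mul_nonneg h1 h2)]
    exact mul_le_mul_of_nonneg_right
      (Real.rpow_le_rpow_of_nonpos hv (by linarith) (by linarith)) h2

lemma J1_bound {α v s : ℝ} (hα0 : α < 0) (hα1 : -1 < α) (hv : 0 < v) (hs : 0 ≤ s) :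
    ∫ u in (0:ℝ)..s, (v + u) ^ (α - 1) * u ^ α
      ≤ (1 / (α + 1) + 1 / (2 * (-α))) * v ^ (2 * α) := by
  have hα1' : 0 < α + 1 := by linarith
  have hv2 : 0 ≤ v ^ (2 * α) := Real.rpow_nonneg hv.le _
  have hKpos : 0 < 1 / (2 * (-α)) := by
    have : 0 < 2 * (-α) := by linarith
    positivity
  have piece1 : ∀ b : ℝ, 0 ≤ b → b ≤ v →
      ∫ u in (0:ℝ)..b, (v + u) ^ (α - 1) * u ^ α ≤ v ^ (2 * α) / (α + 1) := by
    intro b hb hbv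
    have h1 : ∫ u in (0:ℝ)..b, (v + u) ^ (α - 1) * u ^ α
        ≤ ∫ u in (0:ℝ)..b, v ^ (α - 1) * u ^ α := by
      apply intervalIntegral.integral_mono_on hb (II_J1 hα0 hα1 hv le_rfl hb)
        ((intervalIntegrable_rpow' hα1).const_mul _)
      intro x hx
      exact mul_le_mul_of_nonneg_right
        (Real.rpow_le_rpow_of_nonpos hv (by linarith [hx.1]) (by linarith))
        (Real.rpow_nonneg hx.1 _)
    rw [intervalIntegral.integral_const_mul, integral_rpow (Or.inl hα1),
      Real.zero_rpow (by linarith : α + 1 ≠ 0), sub_zero] at h1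
    refine h1.trans ?_
    have hb' : b ^ (α + 1) ≤ v ^ (α + 1) := Real.rpow_le_rpow hb hbv hα1'.le
    have hv1 : 0 ≤ v ^ (α - 1) := Real.rpow_nonneg hv.le _
    calc v ^ (α - 1) * (b ^ (α + 1) / (α + 1))
        ≤ v ^ (α - 1) * (v ^ (α + 1) / (α + 1)) := by gcongr
      _ = v ^ (2 * α) / (α + 1) := by
          rw [mul_div_assoc', ← Real.rpow_add hv, show α - 1 + (α + 1) = 2 * α by ring]
  by_cases hsv : s ≤ v
  · calc ∫ u in (0:ℝ)..s, (v + u) ^ (α - 1) * u ^ α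
        ≤ v ^ (2 * α) / (α + 1) := piece1 s hs hsv
      _ ≤ (1 / (α + 1) + 1 / (2 * (-α))) * v ^ (2 * α) := by
          have he : (1 / (α + 1) + 1 / (2 * (-α))) * v ^ (2 * α)
              = v ^ (2 * α) / (α + 1) + 1 / (2 * (-α)) * v ^ (2 * α) := by ring
          rw [he]
          nlinarith [mul_nonneg hKpos.le hv2]
  · push_neg at hsv
    have hI1 := II_J1 hα0 hα1 hv (le_refl (0:ℝ)) hv.le
    have hI2 := II_J1 hα0 hα1 hv hv.le hs
    rw [← intervalIntegral.integral_add_adjacent_intervals hI1 hI2]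
    have p2 : ∫ u in v..s, (v + u) ^ (α - 1) * u ^ α ≤ v ^ (2 * α) / (2 * (-α)) := by
      have h0uIcc : (0:ℝ) ∉ Set.uIcc v s := by
        rw [Set.uIcc_of_le hsv.le]
        intro h
        exact absurd h.1 (by linarith)
      have h1 : ∫ u in v..s, (v + u) ^ (α - 1) * u ^ α
          ≤ ∫ u in v..s, u ^ (α - 1 + α) := by
        apply intervalIntegral.integral_mono_on hsv.le hI2
          (intervalIntegrable_rpow (Or.inr h0uIcc))
        intro x hx
        have hx0 : 0 < x := lt_of_lt_of_le hv hx.1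
        calc (v + x) ^ (α - 1) * x ^ α
            ≤ x ^ (α - 1) * x ^ α := mul_le_mul_of_nonneg_right
              (Real.rpow_le_rpow_of_nonpos hx0 (by linarith) (by linarith))
              (Real.rpow_nonneg hx0.le _)
          _ = x ^ (α - 1 + α) := (Real.rpow_add hx0 _ _).symm
      rw [integral_rpow (Or.inr ⟨by intro h; linarith, h0uIcc⟩)] at h1
      refine h1.trans ?_
      rw [show α - 1 + α + 1 = 2 * α by ring]
      have hs2 : 0 ≤ s ^ (2 * α) := Real.rpow_nonneg (by linarith) _
      have heq : (s ^ (2 * α) - v ^ (2 * α)) / (2 * α)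
          = (v ^ (2 * α) - s ^ (2 * α)) / (2 * (-α)) := by
        rw [show (2 : ℝ) * (-α) = -(2 * α) by ring, div_neg, ← neg_div, neg_sub]
      rw [heq, div_le_div_iff_of_pos_right (by linarith : (0:ℝ) < 2 * (-α))]
      linarith
    have p1 := piece1 v hv.le le_rfl
    calc (∫ u in (0:ℝ)..v, (v + u) ^ (α - 1) * u ^ α)
          + ∫ u in v..s, (v + u) ^ (α - 1) * u ^ α
        ≤ v ^ (2 * α) / (α + 1) + v ^ (2 * α) / (2 * (-α)) := add_le_add p1 p2
      _ = (1 / (α + 1) + 1 / (2 * (-α))) * v ^ (2 * α) := by ring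

lemma II_psi {α w : ℝ} (hα0 : α < 0) (hw : 0 < w) (a b : ℝ) :
    IntervalIntegrable (fun u => if w < u then u ^ (α - 1) else 0) volume a b := by
  apply IntervalIntegrable.mono_fun' (g := fun _ => w ^ (α - 1)) intervalIntegrable_const
  · exact (Measurable.ite (measurableSet_lt measurable_const measurable_id)
      (measurable_rpow_right _) measurable_const).aestronglyMeasurable
  · filter_upwards with x
    by_cases h : w < x
    · simp only [if_pos h, Real.norm_eq_abs,
        abs_of_nonneg (Real.rpow_nonneg (le_of_lt (hw.trans h)) _)]
      exact Real.rpow_le_rpow_of_nonpos hw h.le (by linarith)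
    · simp only [if_neg h, norm_zero]
      exact Real.rpow_nonneg hw.le _

lemma J2_bound {α w s : ℝ} (hα0 : α < 0) (hw : 0 < w) (hs : 0 ≤ s) :
    ∫ u in (0:ℝ)..s, (if w < u then u ^ (α - 1) else 0) ≤ w ^ α / (-α) := by
  have hpos : 0 ≤ w ^ α / (-α) := div_nonneg (Real.rpow_nonneg hw.le _) (by linarith)
  by_cases hsw : s ≤ w
  · have e0 : ∫ u in (0:ℝ)..s, (if w < u then u ^ (α - 1) else 0) = 0 := by
      have heq : Set.EqOn (fun u : ℝ => if w < u then u ^ (α - 1) else 0) (fun _ => 0)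
          (Set.uIcc 0 s) := by
        intro u hu
        rw [Set.uIcc_of_le hs] at hu
        simp [not_lt.2 (le_trans hu.2 hsw)]
      rw [intervalIntegral.integral_congr heq, intervalIntegral.integral_zero]
    rw [e0]; exact hpos
  · push_neg at hsw
    rw [← intervalIntegral.integral_add_adjacent_intervals (II_psi hα0 hw 0 w) (II_psi hα0 hw w s)]
    have e1 : ∫ u in (0:ℝ)..w, (if w < u then u ^ (α - 1) else 0) = 0 := by
      have heq : Set.EqOn (fun u : ℝ => if w < u then u ^ (α - 1) else 0) (fun _ => 0)
          (Set.uIcc 0 w) := by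
        intro u hu
        rw [Set.uIcc_of_le hw.le] at hu
        simp [not_lt.2 hu.2]
      rw [intervalIntegral.integral_congr heq, intervalIntegral.integral_zero]
    have h0uIcc : (0:ℝ) ∉ Set.uIcc w s := by
      rw [Set.uIcc_of_le hsw.le]; intro h; linarith [h.1]
    have e2 : ∫ u in w..s, (if w < u then u ^ (α - 1) else 0) ≤ ∫ u in w..s, u ^ (α - 1) := by
      apply intervalIntegral.integral_mono_on hsw.le (II_psi hα0 hw w s)
        (intervalIntegrable_rpow (Or.inr h0uIcc))
      intro x hx
      by_cases h : w < x
      · rw [if_pos h]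
      · rw [if_neg h]; exact Real.rpow_nonneg (le_trans hw.le hx.1) _
    rw [e1, zero_add]
    refine e2.trans ?_
    rw [integral_rpow (Or.inr ⟨by intro h; linarith, h0uIcc⟩),
      show α - 1 + 1 = α by ring]
    have h1 : 0 ≤ s ^ α := Real.rpow_nonneg (by linarith) _
    have heq : (s ^ α - w ^ α) / α = (w ^ α - s ^ α) / (-α) := by
      rw [div_neg, ← neg_div, neg_sub]
    rw [heq, div_le_div_iff_of_pos_right (by linarith : (0:ℝ) < -α)]
    linarith

lemma kest_aux {n κ : ℕ} (hn : 1 ≤ n) (hκ : 1 ≤ κ) {sh : ℝ → ℝ → ℝ}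
    (hsh : ∀ s t : ℝ, 0 ≤ s → s < t → t ≤ 1 →
        sh t s ∈ Set.Icc (0 : ℝ) 1 ∧
        (∃ ℓ : ℕ, t - sh t s ∈ Set.Ico ((ℓ : ℝ) / n) (((ℓ : ℝ) + 1) / n) ∧
          t - s ∈ Set.Ico ((ℓ : ℝ) / n) (((ℓ : ℝ) + 1) / n)) ∧
        (t - s ≤ (κ : ℝ) / n → sh t s = s))
    {u r : ℝ} (hr : 0 ≤ r) (hru : r < u) (hu1 : u ≤ 1) :
    0 < u - sh u r ∧ (u - r) / 2 ≤ u - sh u r ∧ |(u - r) - (u - sh u r)| ≤ (n : ℝ)⁻¹ := by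
  have hn0 : (0 : ℝ) < n := by exact_mod_cast Nat.pos_of_ne_zero (by omega)
  obtain ⟨-, ⟨ℓ, h1, h2⟩, h3⟩ := hsh r u hr hru hu1
  have hdiff : |(u - r) - (u - sh u r)| ≤ (n : ℝ)⁻¹ := by
    have e : ((ℓ : ℝ) + 1) / n - (ℓ : ℝ) / n = (n : ℝ)⁻¹ := by field_simp; ring
    rw [abs_le]
    constructor <;> [skip; skip] <;>
      · have := h1.1; have := h1.2; have := h2.1; have := h2.2; linarith
  rcases Nat.eq_zero_or_pos ℓ with hℓ | hℓ
  · subst hℓ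
    have hurn : u - r < (1 : ℝ) / n := by simpa using h2.2
    have hκn : (1 : ℝ) / n ≤ (κ : ℝ) / n := by
      gcongr
      exact_mod_cast hκ
    have hshr : sh u r = r := h3 (le_trans hurn.le hκn)
    rw [hshr]
    refine ⟨by linarith, by linarith, by simp⟩
  · have hℓ1 : (1 : ℝ) ≤ (ℓ : ℝ) := by exact_mod_cast hℓ
    have hshl : (ℓ : ℝ) / n ≤ u - sh u r := h1.1
    have hurl : u - r < ((ℓ : ℝ) + 1) / n := h2.2
    have hln : (0 : ℝ) < (ℓ : ℝ) / n := by positivity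
    have hll : ((ℓ : ℝ) + 1) / n ≤ 2 * ((ℓ : ℝ) / n) := by
      rw [mul_div_assoc']
      gcongr
      linarith
    exact ⟨by linarith, by linarith, hdiff⟩

lemma checkK_bounds {H : ℝ} {n κ : ℕ} {sh : ℝ → ℝ → ℝ}
    (hH0 : 0 < H) (hH1 : H < 1/2) (hn : 1 ≤ n) (hκ : 1 ≤ κ)
    (hsh : ∀ s t : ℝ, 0 ≤ s → s < t → t ≤ 1 →
        sh t s ∈ Set.Icc (0 : ℝ) 1 ∧
        (∃ ℓ : ℕ, t - sh t s ∈ Set.Ico ((ℓ : ℝ) / n) (((ℓ : ℝ) + 1) / n) ∧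
          t - s ∈ Set.Ico ((ℓ : ℝ) / n) (((ℓ : ℝ) + 1) / n)) ∧
        (t - s ≤ (κ : ℝ) / n → sh t s = s))
    {u r : ℝ} (hr : 0 ≤ r) (hru : r < u) (hu1 : u ≤ 1) :
    0 ≤ checkK H sh u r ∧
    checkK H sh u r ≤ 2 ^ (-(H - 1/2)) * (u - r) ^ (H - 1/2) ∧
    |(u - r) ^ (H - 1/2) - checkK H sh u r| ≤
      (1/2 - H) * 2 ^ (1 - (H - 1/2)) * (u - r) ^ (H - 1/2 - 1) * (n : ℝ)⁻¹ := by
  obtain ⟨hpos, hhalf, hdiff⟩ := kest_aux hn hκ hsh hr hru hu1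
  set α := H - 1/2 with hα
  have hα0 : α < 0 := by rw [hα]; linarith
  have hur : 0 < u - r := by linarith
  have hck : checkK H sh u r = (u - sh u r) ^ α := if_pos hru
  have h2 : (0:ℝ) < (u - r) / 2 := by linarith
  have hnegα : -α = 1/2 - H := by rw [hα]; ring
  refine ⟨?_, ?_, ?_⟩
  · rw [hck]; exact Real.rpow_nonneg hpos.le _
  · rw [hck]
    have h := Real.rpow_le_rpow_of_nonpos h2 hhalf hα0.le
    refine h.trans_eq ?_
    rw [Real.div_rpow hur.le (by norm_num), div_eq_mul_inv,
      ← Real.rpow_neg (by norm_num : (0:ℝ) ≤ 2), mul_comm]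
  · rw [hck]
    have hd := rpow_diff_le_aux hα0 h2 (by linarith : (u - r) / 2 ≤ u - r) hhalf
    have he : ((u - r) / 2) ^ (α - 1) = (u - r) ^ (α - 1) * 2 ^ (1 - α) := by
      rw [Real.div_rpow hur.le (by norm_num), div_eq_mul_inv,
        ← Real.rpow_neg (by norm_num : (0:ℝ) ≤ 2), show -(α - 1) = 1 - α by ring]
    calc |(u - r) ^ α - (u - sh u r) ^ α|
        ≤ (-α) * ((u - r) / 2) ^ (α - 1) * |(u - r) - (u - sh u r)| := hd
      _ ≤ (-α) * ((u - r) / 2) ^ (α - 1) * (n : ℝ)⁻¹ := by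
          have h3 : 0 ≤ (-α) * ((u - r) / 2) ^ (α - 1) :=
            mul_nonneg (by linarith) (Real.rpow_nonneg h2.le _)
          exact mul_le_mul_of_nonneg_left hdiff h3
      _ = (1/2 - H) * 2 ^ (1 - α) * (u - r) ^ (α - 1) * (n : ℝ)⁻¹ := by
          rw [he, ← hnegα]; ring

lemma checkK_eq_of_close {H : ℝ} {n κ : ℕ} {sh : ℝ → ℝ → ℝ}
    (hsh : ∀ s t : ℝ, 0 ≤ s → s < t → t ≤ 1 →
        sh t s ∈ Set.Icc (0 : ℝ) 1 ∧
        (∃ ℓ : ℕ, t - sh t s ∈ Set.Ico ((ℓ : ℝ) / n) (((ℓ : ℝ) + 1) / n) ∧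
          t - s ∈ Set.Ico ((ℓ : ℝ) / n) (((ℓ : ℝ) + 1) / n)) ∧
        (t - s ≤ (κ : ℝ) / n → sh t s = s))
    {u r : ℝ} (hr : 0 ≤ r) (hru : r < u) (hu1 : u ≤ 1) (hclose : u - r ≤ (κ : ℝ) / n) :
    checkK H sh u r = (u - r) ^ (H - 1/2) := by
  obtain ⟨-, -, h3⟩ := hsh r u hr hru hu1
  rw [show checkK H sh u r = (u - sh u r) ^ (H - 1/2) from if_pos hru, h3 hclose]

lemma main_core {H : ℝ} (hH0 : 0 < H) (hH1 : H < 1/2) {n κ : ℕ} (hn : 1 ≤ n) (hκ : 1 ≤ κ)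
    {sh : ℝ → ℝ → ℝ} (hmeas : Measurable (fun p : ℝ × ℝ => sh p.1 p.2))
    (hsh : ∀ s t : ℝ, 0 ≤ s → s < t → t ≤ 1 →
        sh t s ∈ Set.Icc (0 : ℝ) 1 ∧
        (∃ ℓ : ℕ, t - sh t s ∈ Set.Ico ((ℓ : ℝ) / n) (((ℓ : ℝ) + 1) / n) ∧
          t - s ∈ Set.Ico ((ℓ : ℝ) / n) (((ℓ : ℝ) + 1) / n)) ∧
        (t - s ≤ (κ : ℝ) / n → sh t s = s))
    {t s : ℝ} (hs0 : 0 ≤ s) (hs1 : s ≤ 1) (ht1 : t ≤ 1) (hκv : (κ : ℝ) / n ≤ t - s) :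
    |(∫ r in (0:ℝ)..s, (t - r) ^ (H - 1/2) * (s - r) ^ (H - 1/2))
      - ∫ r in (0:ℝ)..s, checkK H sh t r * checkK H sh s r|
    ≤ ((1/2 - H) * 2 ^ (1 - (H - 1/2))
          * (1 / (H - 1/2 + 1) + 1 / (2 * -(H - 1/2))))
        * ((n : ℝ)⁻¹ * (t - s) ^ (2 * H - 1))
      + (2 ^ (-(H - 1/2)) * ((1/2 - H) * 2 ^ (1 - (H - 1/2))) / (1/2 - H))
        * ((n : ℝ) ^ (-H - 1/2) * (t - s) ^ (H - 1/2)) := by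
  have hn0 : (0 : ℝ) < n := by exact_mod_cast Nat.pos_of_ne_zero (by omega)
  have hκn : (0 : ℝ) < (κ : ℝ) / n := by
    have : (0 : ℝ) < (κ : ℝ) := by exact_mod_cast hκ
    positivity
  have hα0 : H - 1/2 < 0 := by linarith
  have hα1 : (-1 : ℝ) < H - 1/2 := by linarith
  have hv0 : (0 : ℝ) < t - s := lt_of_lt_of_le hκn hκv
  have hst : s < t := by linarith
  set cd : ℝ := (1/2 - H) * 2 ^ (1 - (H - 1/2)) with hcd_def
  set cb : ℝ := (2 : ℝ) ^ (-(H - 1/2)) with hcb_def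
  have hcd0 : 0 < cd := by
    rw [hcd_def]
    have := Real.rpow_pos_of_pos (by norm_num : (0:ℝ) < 2) (1 - (H - 1/2))
    nlinarith
  have hcb0 : 0 < cb := Real.rpow_pos_of_pos (by norm_num) _
  -- measurability of the kernels
  have hck_meas : ∀ u : ℝ, Measurable (fun r => checkK H sh u r) := by
    intro u
    apply Measurable.ite (measurableSet_lt measurable_id measurable_const)
    · exact (measurable_rpow_right _).comp
        (measurable_const.sub (hmeas.comp (measurable_const.prodMk measurable_id)))
    · exact measurable_const
  have hmem : ∀ x ∈ Set.uIoc (0:ℝ) s, 0 < x ∧ x ≤ s := by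
    intro x hx
    rcases Set.mem_uIoc.1 hx with h | h
    · exact ⟨h.1, h.2⟩
    · exact absurd h.1 (by linarith [h.2])
  -- integrability of the exact kernel product
  have hIf : IntervalIntegrable
      (fun r => (t - r) ^ (H - 1/2) * (s - r) ^ (H - 1/2)) volume 0 s := by
    apply IntervalIntegrable.mono_fun'
      (g := fun r => (t - s) ^ (H - 1/2) * (s - r) ^ (H - 1/2))
      ((II_sub_rpow s _ hα1).const_mul _)
    · exact (((measurable_rpow_right _).comp (measurable_const.sub measurable_id)).mul
        ((measurable_rpow_right _).comp (measurable_const.sub measurable_id))).aestronglyMeasurable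
    · filter_upwards [ae_restrict_mem measurableSet_uIoc] with x hx
      obtain ⟨hx0, hxs⟩ := hmem x hx
      have h1 : 0 ≤ (t - x) ^ (H - 1/2) := Real.rpow_nonneg (by linarith) _
      have h2 : 0 ≤ (s - x) ^ (H - 1/2) := Real.rpow_nonneg (by linarith) _
      rw [Real.norm_eq_abs, abs_of_nonneg (mul_nonneg h1 h2)]
      exact mul_le_mul_of_nonneg_right
        (Real.rpow_le_rpow_of_nonpos hv0 (by linarith) hα0.le) h2
  -- integrability of the approximate kernel product
  have hIg : IntervalIntegrable (fun r => checkK H sh t r * checkK H sh s r) volume 0 s := by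
    apply IntervalIntegrable.mono_fun'
      (g := fun r => (cb * (t - s) ^ (H - 1/2) * cb) * (s - r) ^ (H - 1/2))
      ((II_sub_rpow s _ hα1).const_mul _)
    · exact ((hck_meas t).mul (hck_meas s)).aestronglyMeasurable
    · filter_upwards [ae_restrict_mem measurableSet_uIoc] with x hx
      obtain ⟨hx0, hxs⟩ := hmem x hx
      rcases eq_or_lt_of_le hxs with hxs' | hxs'
      · have hz : checkK H sh s x = 0 := by
          rw [hxs']; exact if_neg (lt_irrefl s)
        rw [hz, mul_zero, norm_zero]
        have : (s - x) ^ (H - 1/2) = 0 := by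
          rw [hxs', sub_self, Real.zero_rpow (by linarith)]
        rw [this, mul_zero]
      · obtain ⟨hg0t, hgbt, -⟩ :=
          checkK_bounds hH0 hH1 hn hκ hsh hx0.le (by linarith : x < t) ht1
        obtain ⟨hg0s, hgbs, -⟩ := checkK_bounds hH0 hH1 hn hκ hsh hx0.le hxs' hs1
        rw [Real.norm_eq_abs, abs_of_nonneg (mul_nonneg hg0t hg0s)]
        have h1 : checkK H sh t x ≤ cb * (t - s) ^ (H - 1/2) := by
          refine hgbt.trans ?_
          exact mul_le_mul_of_nonneg_left
            (Real.rpow_le_rpow_of_nonpos hv0 (by linarith) hα0.le) hcb0.le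
        calc checkK H sh t x * checkK H sh s x
            ≤ (cb * (t - s) ^ (H - 1/2)) * (cb * (s - x) ^ (H - 1/2)) := by
              apply mul_le_mul h1 hgbs hg0s
              positivity
          _ = (cb * (t - s) ^ (H - 1/2) * cb) * (s - x) ^ (H - 1/2) := by ring
  -- integrability of the first error term
  have hIE1 : IntervalIntegrable
      (fun r => (t - r) ^ (H - 1/2 - 1) * (s - r) ^ (H - 1/2)) volume 0 s := by
    have hfe : (fun x : ℝ => (t - s + (s - x)) ^ (H - 1/2 - 1) * (s - x) ^ (H - 1/2))
        = fun r => (t - r) ^ (H - 1/2 - 1) * (s - r) ^ (H - 1/2) := by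
      funext r
      rw [show t - s + (s - r) = t - r by ring]
    have h := ((II_J1 hα0 hα1 hv0 (le_refl (0:ℝ)) hs0).comp_sub_left s).symm
    simp only [sub_zero, sub_self] at h
    rwa [hfe] at h
  -- integrability of the indicator error term
  have hIE2 : IntervalIntegrable
      (fun r => if (κ : ℝ) / n < s - r then (s - r) ^ (H - 1/2 - 1) else 0) volume 0 s := by
    have h := ((II_psi hα0 hκn 0 s).comp_sub_left s).symm
    simpa only [sub_zero, sub_self] using h
  -- pointwise bound
  have hpt : ∀ r ∈ Set.Icc (0:ℝ) s,
      |(t - r) ^ (H - 1/2) * (s - r) ^ (H - 1/2) - checkK H sh t r * checkK H sh s r|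
      ≤ (cd * (n : ℝ)⁻¹) * ((t - r) ^ (H - 1/2 - 1) * (s - r) ^ (H - 1/2))
        + (cb * cd * (n : ℝ)⁻¹ * (t - s) ^ (H - 1/2))
          * (if (κ : ℝ) / n < s - r then (s - r) ^ (H - 1/2 - 1) else 0) := by
    intro r hr
    rcases eq_or_lt_of_le hr.2 with hrs | hrs
    · subst hrs
      have h0 : (r - r : ℝ) = 0 := sub_self r
      have hz : checkK H sh r r = 0 := if_neg (lt_irrefl r)
      rw [hz, h0, Real.zero_rpow (by linarith : H - 1/2 ≠ 0), if_neg (not_lt.2 hκn.le)]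
      simp
    · have hrt : r < t := lt_trans hrs hst
      obtain ⟨hg0t, hgbt, hgdt⟩ := checkK_bounds hH0 hH1 hn hκ hsh hr.1 hrt ht1
      obtain ⟨hg0s, hgbs, hgds⟩ := checkK_bounds hH0 hH1 hn hκ hsh hr.1 hrs hs1
      have hb0 : 0 ≤ (s - r) ^ (H - 1/2) := Real.rpow_nonneg (by linarith) _
      have key : |(t - r) ^ (H - 1/2) * (s - r) ^ (H - 1/2)
            - checkK H sh t r * checkK H sh s r|
          ≤ |(t - r) ^ (H - 1/2) - checkK H sh t r| * (s - r) ^ (H - 1/2)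
            + checkK H sh t r * |(s - r) ^ (H - 1/2) - checkK H sh s r| := by
        have e : (t - r) ^ (H - 1/2) * (s - r) ^ (H - 1/2)
              - checkK H sh t r * checkK H sh s r
            = ((t - r) ^ (H - 1/2) - checkK H sh t r) * (s - r) ^ (H - 1/2)
              + checkK H sh t r * ((s - r) ^ (H - 1/2) - checkK H sh s r) := by ring
        rw [e]
        refine (abs_add_le _ _).trans ?_
        rw [abs_mul, abs_mul, abs_of_nonneg hb0, abs_of_nonneg hg0t]
      refine key.trans ?_
      have t1 : |(t - r) ^ (H - 1/2) - checkK H sh t r| * (s - r) ^ (H - 1/2)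
          ≤ (cd * (n : ℝ)⁻¹) * ((t - r) ^ (H - 1/2 - 1) * (s - r) ^ (H - 1/2)) := by
        calc |(t - r) ^ (H - 1/2) - checkK H sh t r| * (s - r) ^ (H - 1/2)
            ≤ (cd * (t - r) ^ (H - 1/2 - 1) * (n : ℝ)⁻¹) * (s - r) ^ (H - 1/2) :=
              mul_le_mul_of_nonneg_right hgdt hb0
          _ = (cd * (n : ℝ)⁻¹) * ((t - r) ^ (H - 1/2 - 1) * (s - r) ^ (H - 1/2)) := by ring
      by_cases hind : (κ : ℝ) / n < s - r
      · rw [if_pos hind]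
        have h1 : checkK H sh t r ≤ cb * (t - s) ^ (H - 1/2) := by
          refine hgbt.trans ?_
          exact mul_le_mul_of_nonneg_left
            (Real.rpow_le_rpow_of_nonpos hv0 (by linarith) hα0.le) hcb0.le
        have t2 : checkK H sh t r * |(s - r) ^ (H - 1/2) - checkK H sh s r|
            ≤ (cb * (t - s) ^ (H - 1/2)) * (cd * (s - r) ^ (H - 1/2 - 1) * (n : ℝ)⁻¹) := by
          apply mul_le_mul h1 hgds (abs_nonneg _)
          positivity
        refine (add_le_add t1 t2).trans_eq ?_
        ring
      · rw [if_neg hind]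
        push_neg at hind
        have hb' : checkK H sh s r = (s - r) ^ (H - 1/2) :=
          checkK_eq_of_close hsh hr.1 hrs hs1 hind
        rw [hb', sub_self, abs_zero, mul_zero, mul_zero, add_zero]
        linarith [t1]
  -- assemble
  have hE1I : IntervalIntegrable (fun r =>
      (cd * (n : ℝ)⁻¹) * ((t - r) ^ (H - 1/2 - 1) * (s - r) ^ (H - 1/2))) volume 0 s :=
    hIE1.const_mul _
  have hE2I : IntervalIntegrable (fun r =>
      (cb * cd * (n : ℝ)⁻¹ * (t - s) ^ (H - 1/2))
        * (if (κ : ℝ) / n < s - r then (s - r) ^ (H - 1/2 - 1) else 0)) volume 0 s :=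
    hIE2.const_mul _
  rw [← intervalIntegral.integral_sub hIf hIg]
  refine le_trans (intervalIntegral.abs_integral_le_integral_abs hs0) ?_
  refine le_trans (intervalIntegral.integral_mono_on hs0 ((hIf.sub hIg).abs)
    (hE1I.add hE2I) hpt) ?_
  rw [intervalIntegral.integral_add hE1I hE2I, intervalIntegral.integral_const_mul,
    intervalIntegral.integral_const_mul]
  -- bound the first integral
  have hfe : (fun x : ℝ => (t - s + (s - x)) ^ (H - 1/2 - 1) * (s - x) ^ (H - 1/2))
      = fun r => (t - r) ^ (H - 1/2 - 1) * (s - r) ^ (H - 1/2) := by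
    funext r
    rw [show t - s + (s - r) = t - r by ring]
  have hJ1 : ∫ r in (0:ℝ)..s, (t - r) ^ (H - 1/2 - 1) * (s - r) ^ (H - 1/2)
      ≤ (1 / (H - 1/2 + 1) + 1 / (2 * -(H - 1/2))) * (t - s) ^ (2 * (H - 1/2)) := by
    have h := intervalIntegral.integral_comp_sub_left (a := (0:ℝ)) (b := s)
      (fun u => (t - s + u) ^ (H - 1/2 - 1) * u ^ (H - 1/2)) s
    simp only [sub_zero, sub_self] at h
    rw [hfe] at h
    rw [h]
    exact J1_bound hα0 hα1 hv0 hs0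
  -- bound the second integral
  have hJ2 : ∫ r in (0:ℝ)..s, (if (κ : ℝ) / n < s - r then (s - r) ^ (H - 1/2 - 1) else 0)
      ≤ (n : ℝ) ^ (-(H - 1/2)) / (-(H - 1/2)) := by
    have h := intervalIntegral.integral_comp_sub_left (a := (0:ℝ)) (b := s)
      (fun u => if (κ : ℝ) / n < u then u ^ (H - 1/2 - 1) else 0) s
    simp only [sub_zero, sub_self] at h
    rw [h]
    refine (J2_bound hα0 hκn hs0).trans ?_
    have h1 : ((n : ℝ))⁻¹ ≤ (κ : ℝ) / n := by
      rw [inv_eq_one_div]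
      gcongr
      exact_mod_cast hκ
    have h2 : ((κ : ℝ) / n) ^ (H - 1/2) ≤ ((n : ℝ)⁻¹) ^ (H - 1/2) :=
      Real.rpow_le_rpow_of_nonpos (by positivity) h1 hα0.le
    rw [Real.inv_rpow hn0.le, ← Real.rpow_neg hn0.le] at h2
    rw [div_le_div_iff_of_pos_right (by linarith : (0:ℝ) < -(H - 1/2))]
    exact h2
  have hnn : (n : ℝ)⁻¹ * (n : ℝ) ^ (-(H - 1/2)) = (n : ℝ) ^ (-H - 1/2) := by
    rw [← Real.rpow_neg_one (n : ℝ), ← Real.rpow_add hn0,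
      show (-1 : ℝ) + -(H - 1/2) = -H - 1/2 by ring]
  have hc1 : (0:ℝ) ≤ cd * (n : ℝ)⁻¹ := mul_nonneg hcd0.le (by positivity)
  have hc2 : (0:ℝ) ≤ cb * cd * (n : ℝ)⁻¹ * (t - s) ^ (H - 1/2) :=
    mul_nonneg (mul_nonneg (mul_nonneg hcb0.le hcd0.le) (by positivity))
      (Real.rpow_nonneg hv0.le _)
  calc (cd * (n : ℝ)⁻¹) * (∫ r in (0:ℝ)..s, (t - r) ^ (H - 1/2 - 1) * (s - r) ^ (H - 1/2))
        + (cb * cd * (n : ℝ)⁻¹ * (t - s) ^ (H - 1/2))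
          * (∫ r in (0:ℝ)..s, (if (κ : ℝ) / n < s - r then (s - r) ^ (H - 1/2 - 1) else 0))
      ≤ (cd * (n : ℝ)⁻¹)
          * ((1 / (H - 1/2 + 1) + 1 / (2 * -(H - 1/2))) * (t - s) ^ (2 * (H - 1/2)))
        + (cb * cd * (n : ℝ)⁻¹ * (t - s) ^ (H - 1/2))
          * ((n : ℝ) ^ (-(H - 1/2)) / (-(H - 1/2))) :=
        add_le_add (mul_le_mul_of_nonneg_left hJ1 hc1) (mul_le_mul_of_nonneg_left hJ2 hc2)
    _ = cd * (1 / (H - 1/2 + 1) + 1 / (2 * -(H - 1/2))) * ((n : ℝ)⁻¹ * (t - s) ^ (2 * H - 1))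
        + cb * cd / (1/2 - H)
          * (((n : ℝ)⁻¹ * (n : ℝ) ^ (-(H - 1/2))) * (t - s) ^ (H - 1/2)) := by
        rw [show 2 * (H - 1/2) = 2 * H - 1 by ring]
        ring
    _ = cd * (1 / (H - 1/2 + 1) + 1 / (2 * -(H - 1/2))) * ((n : ℝ)⁻¹ * (t - s) ^ (2 * H - 1))
        + cb * cd / (1/2 - H) * ((n : ℝ) ^ (-H - 1/2) * (t - s) ^ (H - 1/2)) := by
        rw [hnn]


/-- under Assumption 3.1 on the shift map `š` (measurable, valued in `[0,1]`,
`t - š(t,s)` in the same grid interval `[ℓ/n, (ℓ+1)/n)` as `t - s`, and `š(t,s) = s` when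
`t - s ≤ κ/n`), for all grid points `s = j/n ≤ t = m/n` with `t - s ≥ κ/n`,
`|∫₀^s (t-r)^(H-1/2)(s-r)^(H-1/2) dr - ∫₀^s čK(t,r) čK(s,r) dr|
  ≤ C (n⁻¹ (t-s)^(2H-1) + n^(-H-1/2) (t-s)^(H-1/2))`,
with `C` depending only on `H` and `κ`. -/
theorem hybrid_covariance_error_bound (H : ℝ) (hH0 : 0 < H) (hH1 : H < 1/2)
    (κ : ℕ) (hκ : 1 ≤ κ) :
    ∃ C > 0, ∀ n : ℕ, 1 ≤ n → ∀ sh : ℝ → ℝ → ℝ,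
      Measurable (fun p : ℝ × ℝ => sh p.1 p.2) →
      (∀ s t : ℝ, 0 ≤ s → s < t → t ≤ 1 →
        sh t s ∈ Set.Icc (0 : ℝ) 1 ∧
        (∃ ℓ : ℕ, t - sh t s ∈ Set.Ico ((ℓ : ℝ) / n) (((ℓ : ℝ) + 1) / n) ∧
          t - s ∈ Set.Ico ((ℓ : ℝ) / n) (((ℓ : ℝ) + 1) / n)) ∧
        (t - s ≤ (κ : ℝ) / n → sh t s = s)) →
      ∀ j m : ℕ, j ≤ n → m ≤ n → (κ : ℝ) / n ≤ (m : ℝ) / n - (j : ℝ) / n →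
        |(∫ r in (0 : ℝ)..((j : ℝ) / n),
            ((m : ℝ) / n - r) ^ (H - 1/2) * ((j : ℝ) / n - r) ^ (H - 1/2))
          - ∫ r in (0 : ℝ)..((j : ℝ) / n),
              checkK H sh ((m : ℝ) / n) r * checkK H sh ((j : ℝ) / n) r|
        ≤ C * ((n : ℝ)⁻¹ * ((m : ℝ) / n - (j : ℝ) / n) ^ (2 * H - 1)
            + (n : ℝ) ^ (-H - 1/2) * ((m : ℝ) / n - (j : ℝ) / n) ^ (H - 1/2)) := by
  have h1 : (0:ℝ) < 1/2 - H := by linarith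
  have h2 : (0:ℝ) < (2:ℝ) ^ (1 - (H - 1/2)) := Real.rpow_pos_of_pos (by norm_num) _
  have h3 : (0:ℝ) < (2:ℝ) ^ (-(H - 1/2)) := Real.rpow_pos_of_pos (by norm_num) _
  have h4 : (0:ℝ) < 1 / (H - 1/2 + 1) := by
    have : (0:ℝ) < H - 1/2 + 1 := by linarith
    positivity
  have h5 : (0:ℝ) < 1 / (2 * -(H - 1/2)) := by
    have : (0:ℝ) < 2 * -(H - 1/2) := by linarith
    positivity
  have hA : (0:ℝ) < (1/2 - H) * 2 ^ (1 - (H - 1/2)) := mul_pos h1 h2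
  have hB : (0:ℝ) < (1/2 - H) * 2 ^ (1 - (H - 1/2))
      * (1 / (H - 1/2 + 1) + 1 / (2 * -(H - 1/2))) := mul_pos hA (add_pos h4 h5)
  have hC : (0:ℝ) < 2 ^ (-(H - 1/2)) * ((1/2 - H) * 2 ^ (1 - (H - 1/2))) / (1/2 - H) :=
    div_pos (mul_pos h3 hA) h1
  refine ⟨(1/2 - H) * 2 ^ (1 - (H - 1/2)) * (1 / (H - 1/2 + 1) + 1 / (2 * -(H - 1/2)))
    + 2 ^ (-(H - 1/2)) * ((1/2 - H) * 2 ^ (1 - (H - 1/2))) / (1/2 - H) + 1,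
    by linarith, ?_⟩
  intro n hn sh hmeas hsh j m hj hm hκv
  have hn0 : (0 : ℝ) < n := by exact_mod_cast Nat.pos_of_ne_zero (by omega)
  have hκn : (0 : ℝ) < (κ : ℝ) / n := by
    have : (0 : ℝ) < (κ : ℝ) := by exact_mod_cast hκ
    positivity
  have hv0 : (0:ℝ) < (m : ℝ) / n - (j : ℝ) / n := lt_of_lt_of_le hκn hκv
  have hs0 : (0:ℝ) ≤ (j : ℝ) / n := by positivity
  have hs1 : (j : ℝ) / n ≤ 1 := by
    rw [div_le_one hn0]; exact_mod_cast hj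
  have ht1 : (m : ℝ) / n ≤ 1 := by
    rw [div_le_one hn0]; exact_mod_cast hm
  refine (main_core hH0 hH1 hn hκ hmeas hsh hs0 hs1 ht1 hκv).trans ?_
  have hX : (0:ℝ) ≤ (n : ℝ)⁻¹ * ((m : ℝ) / n - (j : ℝ) / n) ^ (2 * H - 1) :=
    mul_nonneg (by positivity) (Real.rpow_nonneg hv0.le _)
  have hY : (0:ℝ) ≤ (n : ℝ) ^ (-H - 1/2) * ((m : ℝ) / n - (j : ℝ) / n) ^ (H - 1/2) :=
    mul_nonneg (Real.rpow_nonneg hn0.le _) (Real.rpow_nonneg hv0.le _)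
  nlinarith [mul_nonneg hB.le hY, mul_nonneg hC.le hX, mul_nonneg hB.le hX,
    mul_nonneg hC.le hY]
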